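/- Bonnet–Myers type theorem: let (X,d,m,G) be a gauge metric measure space satisfying MCP(β) for a distortion coefficient β as in the context, and assume G(x,y) ≥ d(x,y) for all x,y ∈ X. Then diam(supp m) ≤ 𝒟, and if moreover 𝒟 < +∞ then supp m is compact. -/

import Mathlib

open MeasureTheory Filter Set Metric ENNReal Topology

noncomputable section

namespace GMMS

variable {X : Type*}

open Classical in
/-- The support of a Borel measure on a metric space: points all of whose balls have
positive measure. -/
def mSupp [PseudoMetricSpace X] [MeasurableSpace X] (m : Measure X) : Set X :=
  {x : X | ∀ r : ℝ, 0 < r → 0 < m (Metric.ball x r)}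

/-- A measure which is finite on every bounded set. -/
def FiniteOnBounded [PseudoMetricSpace X] [MeasurableSpace X] (m : Measure X) : Prop :=
  ∀ s : Set X, Bornology.IsBounded s → m s < ⊤

open Classical in
/-- The nonnegative part of an extended real number, in `[0,∞]`. -/
def epos (x : EReal) : ℝ≥0∞ := if x = ⊤ then ⊤ else ENNReal.ofReal x.toReal

/-- Integral of an `EReal`-valued function, defined as the difference of the lower integrals of
the positive and negative parts (with the `EReal` convention `⊤ - ⊤ = ⊥`). -/
def eintegral {α : Type*} [MeasurableSpace α] (ν : Measure α) (f : α → EReal) : EReal :=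
  ((∫⁻ a, epos (f a) ∂ν : ℝ≥0∞) : EReal) - ((∫⁻ a, epos (-(f a)) ∂ν : ℝ≥0∞) : EReal)

/-- `𝒟 = inf {θ > 0 | s θ = 0} ∈ (0,+∞]`. -/
def Dcal (s : ℝ → ℝ) : ℝ≥0∞ :=
  sInf (ENNReal.ofReal '' {θ : ℝ | 0 < θ ∧ s θ = 0})

/-- The distortion coefficient `β` associated with the data `(s, N)`:
`β t 0 = t ^ N`, `β t θ = s (t θ) / s θ` for `0 < θ < 𝒟`, and
`β t θ = liminf_{φ → 𝒟⁻} s (t φ) / s φ` for `θ ≥ 𝒟`. -/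
def beta (s : ℝ → ℝ) (N : ℝ) (t : ℝ) (θ : ℝ≥0∞) : ℝ≥0∞ :=
  if θ = 0 then ENNReal.ofReal (t ^ N)
  else if θ < Dcal s then ENNReal.ofReal (s (t * θ.toReal) / s θ.toReal)
  else Filter.liminf (fun φ : ℝ≥0∞ => ENNReal.ofReal (s (t * φ.toReal) / s φ.toReal))
      (nhdsWithin (Dcal s) (Set.Iio (Dcal s)))

open Classical in
/-- The data `(s, N)` defining a distortion coefficient: `N ∈ [1,∞)`, `s` continuous on `[0,∞)`
with `s θ = c θ^N + o(θ^N)` as `θ → 0⁺`, for some `c > 0`. -/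
structure DistortionData (s : ℝ → ℝ) (N : ℝ) : Prop where
  one_le : 1 ≤ N
  cont : ContinuousOn s (Set.Ici 0)
  asymp : ∃ c : ℝ, 0 < c ∧
    (fun θ : ℝ => s θ - c * θ ^ N) =o[nhdsWithin 0 (Set.Ioi 0)] (fun θ : ℝ => θ ^ N)

/-- The space of (constant-speed, defined on `[0,1]`) geodesics of a metric space. -/
abbrev GeoSpace (X : Type*) [MetricSpace X] : Type _ :=
  {γ : C(unitInterval, X) //
    ∀ s t : unitInterval, dist (γ s) (γ t) = |(s : ℝ) - (t : ℝ)| * dist (γ 0) (γ 1)}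

instance [MetricSpace X] : MeasurableSpace (GeoSpace X) := borel _

/-- Evaluation of a geodesic at time `t ∈ [0,1]`. -/
def geval [MetricSpace X] (γ : GeoSpace X) (t : ℝ) : X :=
  γ.1 (Set.projIcc 0 1 zero_le_one t)

/-- The squared quadratic Kantorovich-Rubinstein-Wasserstein transportation cost. -/
def W2sq [MetricSpace X] [MeasurableSpace X] (μ ν : Measure X) : ℝ≥0∞ :=
  ⨅ (π : Measure (X × X)) (_ : π.map Prod.fst = μ) (_ : π.map Prod.snd = ν),
    ∫⁻ p, edist p.1 p.2 ^ 2 ∂π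

/-- A `W₂`-geodesic: a curve of probability measures with finite second moment such that
`W₂(μ_s, μ_t) = |s - t| W₂(μ_0, μ_1)`. -/
structure IsW2Geo [MetricSpace X] [MeasurableSpace X] (μ : ℝ → Measure X) : Prop where
  prob : ∀ t ∈ Set.Icc (0:ℝ) 1, IsProbabilityMeasure (μ t)
  moment : ∀ t ∈ Set.Icc (0:ℝ) 1, ∃ x₀ : X, ∫⁻ x, edist x x₀ ^ 2 ∂(μ t) < ⊤
  geo : ∀ s ∈ Set.Icc (0:ℝ) 1, ∀ t ∈ Set.Icc (0:ℝ) 1,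
    W2sq (μ s) (μ t) = ENNReal.ofReal ((s - t) ^ 2) * W2sq (μ 0) (μ 1)

/-- Optimal dynamical plans from `μ0` to `μ1`. -/
def OptGeoSet [MetricSpace X] [MeasurableSpace X] (μ0 μ1 : Measure X) :
    Set (Measure (GeoSpace X)) :=
  {ν | IsProbabilityMeasure ν ∧
    (ν.map fun γ => (geval γ 0, geval γ 1)).map Prod.fst = μ0 ∧
    (ν.map fun γ => (geval γ 0, geval γ 1)).map Prod.snd = μ1 ∧
    ∫⁻ p, edist p.1 p.2 ^ 2 ∂(ν.map fun γ => (geval γ 0, geval γ 1)) = W2sq μ0 μ1}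

open Classical in
/-- The Boltzmann-Shannon relative entropy `Ent(μ|m) = ∫ ρ log ρ dm` if `μ = ρ m` with
`ρ log ρ ∈ L¹(m)`, and `+∞` otherwise. -/
def Ent [MeasurableSpace X] (μ m : Measure X) : EReal :=
  if μ ≪ m ∧
      Integrable (fun x => (μ.rnDeriv m x).toReal * Real.log (μ.rnDeriv m x).toReal) m
  then ((∫ x, (μ.rnDeriv m x).toReal * Real.log (μ.rnDeriv m x).toReal ∂m : ℝ) : EReal)
  else (⊤ : EReal)

/-- The dimensional entropy `U_n(μ|m) = exp (-Ent(μ|m)/n)`, with value `0` when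
`Ent(μ|m) = +∞`. -/
def UnE [MeasurableSpace X] (n : ℝ) (μ m : Measure X) : ℝ≥0∞ :=
  EReal.exp (((n⁻¹ : ℝ) : EReal) * (-(Ent μ m)))

/-- Probability measures with bounded support contained in `supp m`. -/
def Pbs [MetricSpace X] [MeasurableSpace X] (m : Measure X) : Set (Measure X) :=
  {μ | IsProbabilityMeasure μ ∧ Bornology.IsBounded (mSupp μ) ∧ mSupp μ ⊆ mSupp m}

/-- Probability measures with bounded support contained in `supp m` and finite entropy. -/
def PbsStar [MetricSpace X] [MeasurableSpace X] (m : Measure X) : Set (Measure X) :=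
  {μ | μ ∈ Pbs m ∧ Ent μ m ≠ ⊤}

/-- The coefficient `exp ((1/n) ∫ log (f γ) dν(γ))` appearing in the `CD(β,n)` inequality. -/
def cdCoeff [MetricSpace X] (n : ℝ) (ν : Measure (GeoSpace X)) (f : GeoSpace X → ℝ≥0∞) :
    ℝ≥0∞ :=
  EReal.exp (((n⁻¹ : ℝ) : EReal) * eintegral ν fun γ => ENNReal.log (f γ))

/-- The `CD` convexity inequality along the dynamical plan `ν`, for a coefficient
`b : [0,1] × [0,∞] → [0,∞]` (with the conventions `∞ ⬝ 0 = 0` of `ℝ≥0∞`). -/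
def CDineq [MetricSpace X] [MeasurableSpace X] (m : Measure X) (G : X → X → ℝ≥0∞)
    (b : ℝ → ℝ≥0∞ → ℝ≥0∞) (n : ℝ) (μ0 μ1 : Measure X) (ν : Measure (GeoSpace X)) : Prop :=
  ∀ t ∈ Set.Ioo (0:ℝ) 1,
    cdCoeff n ν (fun γ => b (1 - t) (G (geval γ 1) (geval γ 0))) * UnE n μ0 m
      + cdCoeff n ν (fun γ => b t (G (geval γ 0) (geval γ 1))) * UnE n μ1 m
      ≤ UnE n (ν.map fun γ => geval γ t) m

/-- The curvature-dimension condition `CD(b, n)` for the gauge metric measure space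
`(X, d, m, G)`. -/
def CD [MetricSpace X] [MeasurableSpace X] (m : Measure X) (G : X → X → ℝ≥0∞)
    (b : ℝ → ℝ≥0∞ → ℝ≥0∞) (n : ℝ) : Prop :=
  ∀ μ0 ∈ Pbs m, ∀ μ1 ∈ PbsStar m, mSupp μ0 ∩ mSupp μ1 = ∅ →
    ∃ ν ∈ OptGeoSet μ0 μ1, CDineq m G b n μ0 μ1 ν

/-- The strong curvature-dimension condition: the `CD` inequality holds along every
optimal dynamical plan. -/
def CDStrong [MetricSpace X] [MeasurableSpace X] (m : Measure X) (G : X → X → ℝ≥0∞)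
    (b : ℝ → ℝ≥0∞ → ℝ≥0∞) (n : ℝ) : Prop :=
  ∀ μ0 ∈ Pbs m, ∀ μ1 ∈ PbsStar m, mSupp μ0 ∩ mSupp μ1 = ∅ →
    ∀ ν ∈ OptGeoSet μ0 μ1, CDineq m G b n μ0 μ1 ν

/-- The measure contraction property `MCP(b)` for the gauge metric measure space
`(X, d, m, G)`. -/
def MCP [MetricSpace X] [MeasurableSpace X] (m : Measure X) (G : X → X → ℝ≥0∞)
    (b : ℝ → ℝ≥0∞ → ℝ≥0∞) : Prop :=
  ∀ x ∈ mSupp m, ∀ μ1 ∈ PbsStar m, x ∉ mSupp μ1 →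
    ∃ μ : ℝ → Measure X, IsW2Geo μ ∧ μ 0 = Measure.dirac x ∧ μ 1 = μ1 ∧
      ∀ t ∈ Set.Ioo (0:ℝ) 1, ∀ n : ℝ, 1 ≤ n →
        EReal.exp (((n⁻¹ : ℝ) : EReal) * eintegral μ1 fun y => ENNReal.log (b t (G x y)))
            * UnE n μ1 m
          ≤ UnE n (μ t) m

/-- The set of `t`-intermediate points between `A0` and `A1`. -/
def Zt [MetricSpace X] (t : ℝ) (A0 A1 : Set X) : Set X :=
  {x | ∃ γ : GeoSpace X, geval γ 0 ∈ A0 ∧ geval γ 1 ∈ A1 ∧ geval γ t = x}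

/-- The distortion coefficient `β_t(A0, A1)` between two sets. -/
def betaSet [MetricSpace X] [MeasurableSpace X] (m : Measure X) (G : X → X → ℝ≥0∞)
    (b : ℝ≥0∞ → ℝ≥0∞) (A0 A1 : Set X) : ℝ≥0∞ :=
  ⨆ (A0' : Set X) (_ : A0' ⊆ A0) (_ : A0'.Nonempty) (_ : m (A0 \ A0') = 0)
    (A1' : Set X) (_ : A1' ⊆ A1) (_ : A1'.Nonempty) (_ : m (A1 \ A1') = 0),
    ⨅ (x0 : X) (_ : x0 ∈ A0' ∩ mSupp m) (x1 : X) (_ : x1 ∈ A1' ∩ mSupp m), b (G x0 x1)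

/-- The "true" distortion coefficient of a metric measure space. -/
def trueBeta [MetricSpace X] [MeasurableSpace X] (m : Measure X) (t : ℝ) (x y : X) : ℝ≥0∞ :=
  Filter.limsup (fun r : ℝ => m (Zt t {x} (Metric.ball y r)) / m (Metric.ball y r))
    (nhdsWithin 0 (Set.Ioi 0))

/-- The `G`-diameter of a set. -/
def diamG [MetricSpace X] [MeasurableSpace X] (m : Measure X) (G : X → X → ℝ≥0∞)
    (S : Set X) : ℝ≥0∞ :=
  ⨆ x ∈ S, essSup (fun y => G x y) (m.restrict (S \ {x}))

/-- The quantity `C_σ(x)` entering the definition of the geodesic dimension. -/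
def Csig [MetricSpace X] [MeasurableSpace X] (m : Measure X) (σ : ℝ) (x : X) : ℝ≥0∞ :=
  ⨆ (A : Set X) (_ : MeasurableSet A) (_ : Bornology.IsBounded A) (_ : x ∉ A)
    (_ : 0 < m A) (_ : m A < ⊤),
    Filter.limsup (fun t : ℝ => ENNReal.ofReal (t ^ (-σ)) * m (Zt t {x} A) / m A)
      (nhdsWithin 0 (Set.Ioi 0))

/-- The geodesic dimension at a point. -/
def dimGeo [MetricSpace X] [MeasurableSpace X] (m : Measure X) (x : X) : ℝ≥0∞ :=
  sInf (ENNReal.ofReal '' {σ : ℝ | 0 < σ ∧ Csig m σ x = ⊤})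

/-- The geodesic dimension of a set. -/
def dimGeoS [MetricSpace X] [MeasurableSpace X] (m : Measure X) (S : Set X) : ℝ≥0∞ :=
  ⨆ x ∈ S, dimGeo m x

/-- The gauge `G` is meek. -/
def Meek [MetricSpace X] [MeasurableSpace X] (m : Measure X) (G : X → X → ℝ≥0∞) : Prop :=
  ∀ x ∈ mSupp m, ∀ μ1 ∈ PbsStar m, x ∉ mSupp μ1 →
    ∀ ν ∈ OptGeoSet (Measure.dirac x) μ1,
      ∃ Γ : Set (GeoSpace X), MeasurableSet Γ ∧ ν Γ = 1 ∧
        ∀ γ ∈ Γ, ∀ t ∈ Set.Ioc (0:ℝ) 1,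
          G (geval γ 0) (geval γ t) = ENNReal.ofReal t * G (geval γ 0) (geval γ 1)

/-- The measure `v_G(x₀, r, ρ)` of the intersection of a gauge sublevel set with a metric
ball. -/
def vG [MetricSpace X] [MeasurableSpace X] (m : Measure X) (G : X → X → ℝ≥0∞)
    (x0 : X) (r ρ : ℝ) : ℝ≥0∞ :=
  m {x | G x0 x ≤ ENNReal.ofReal r ∧ dist x0 x ≤ ρ}

/-- `(supp m, d)` is a geodesic space: any two points of the support are joined by a geodesic
contained in the support. -/
def GeodesicSupp [MetricSpace X] [MeasurableSpace X] (m : Measure X) : Prop :=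
  ∀ x ∈ mSupp m, ∀ y ∈ mSupp m, ∃ γ : GeoSpace X,
    geval γ 0 = x ∧ geval γ 1 = y ∧ ∀ t ∈ Set.Icc (0:ℝ) 1, geval γ t ∈ mSupp m

section Helpers

variable {s : ℝ → ℝ} {N : ℝ}

lemma spos (hsN : DistortionData s N) : ∃ δ : ℝ, 0 < δ ∧ ∀ θ : ℝ, 0 < θ → θ < δ → 0 < s θ := by
  obtain ⟨c, hc, ho⟩ := hsN.asymp
  have h := ho.def (half_pos hc)
  rw [Filter.eventually_iff_exists_mem] at h
  obtain ⟨v, hv, hvh⟩ := h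
  rw [mem_nhdsWithin] at hv
  obtain ⟨u, hu, h0u, huv⟩ := hv
  obtain ⟨δ, hδ, hball⟩ := Metric.isOpen_iff.1 hu 0 h0u
  refine ⟨δ, hδ, fun θ hθ hθδ => ?_⟩
  have hθu : θ ∈ v := huv ⟨hball (by simp [Real.dist_eq, abs_of_pos hθ, hθδ]), hθ⟩
  have h2 := hvh θ hθu
  have hpow : 0 < θ ^ N := Real.rpow_pos_of_pos hθ N
  have habs : |s θ - c * θ ^ N| ≤ c / 2 * θ ^ N := by
    simpa [abs_of_pos hpow, Real.norm_eq_abs] using h2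
  have := abs_le.1 habs
  nlinarith [this.1, hpow]

lemma le_Dcal {θ : ℝ} (hθ : 0 < θ) (hs0 : s θ = 0) : Dcal s ≤ ENNReal.ofReal θ :=
  sInf_le ⟨θ, ⟨hθ, hs0⟩, rfl⟩

lemma Dcal_pos (hsN : DistortionData s N) : 0 < Dcal s := by
  obtain ⟨δ, hδ, h⟩ := spos hsN
  refine lt_of_lt_of_le (show (0:ℝ≥0∞) < ENNReal.ofReal δ by simpa using hδ) (le_sInf ?_)
  rintro b ⟨θ, ⟨hθ, hs0⟩, rfl⟩
  rcases le_or_gt δ θ with hl | hl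
  · exact ENNReal.ofReal_le_ofReal hl
  · exact absurd hs0 (ne_of_gt (h θ hθ hl))

lemma s_pos_of_lt_Dcal (hsN : DistortionData s N) {θ : ℝ} (hθ : 0 < θ)
    (hlt : ENNReal.ofReal θ < Dcal s) : 0 < s θ := by
  obtain ⟨δ, hδ, h⟩ := spos hsN
  by_contra hle
  push_neg at hle
  rcases lt_or_eq_of_le hle with hlt' | heq
  · -- s θ < 0 : IVT gives a zero in (0, θ)
    have hθδ : δ / 2 ≤ θ := by
      by_contra hc; push_neg at hc
      exact absurd (h θ hθ (lt_of_lt_of_le hc (by linarith))) (not_lt.2 hle)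
    set θ₁ := min (δ / 2) θ with hθ₁
    have hθ₁pos : 0 < θ₁ := lt_min (by linarith) hθ
    have hθ₁lt : θ₁ < δ := lt_of_le_of_lt (min_le_left _ _) (by linarith)
    have hsθ₁ : 0 < s θ₁ := h θ₁ hθ₁pos hθ₁lt
    have hsub : Icc θ₁ θ ⊆ Ici (0:ℝ) := fun z hz => le_trans hθ₁pos.le hz.1
    have hIVT := intermediate_value_Icc (min_le_right (δ/2) θ) (hsN.cont.mono hsub)
    have h0mem : (0:ℝ) ∈ Icc (s θ₁) (s θ) ∨ (0:ℝ) ∈ Icc (s θ) (s θ₁) := by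
      right; exact ⟨hlt'.le, hsθ₁.le⟩
    have hIVT' := intermediate_value_Icc' (min_le_right (δ/2) θ) (hsN.cont.mono hsub)
    have : (0:ℝ) ∈ s '' Icc θ₁ θ := hIVT' ⟨hlt'.le, hsθ₁.le⟩
    obtain ⟨z, hz, hz0⟩ := this
    have hzpos : 0 < z := lt_of_lt_of_le hθ₁pos hz.1
    have := le_Dcal hzpos hz0
    exact absurd (lt_of_le_of_lt (this.trans (ENNReal.ofReal_le_ofReal hz.2)) hlt) (lt_irrefl _)
  · have := le_Dcal hθ heq
    exact absurd (lt_of_le_of_lt this hlt) (lt_irrefl _)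

lemma s_Dcal_eq_zero (hsN : DistortionData s N) (hD : Dcal s ≠ ⊤) :
    s (Dcal s).toReal = 0 := by
  set D := (Dcal s).toReal with hDdef
  have hZne : {θ : ℝ | 0 < θ ∧ s θ = 0}.Nonempty := by
    by_contra hc
    rw [not_nonempty_iff_eq_empty] at hc
    simp [Dcal, hc] at hD
  -- build a sequence θ_n → D with s θ_n = 0
  have key : ∀ n : ℕ, ∃ θ : ℝ, 0 < θ ∧ s θ = 0 ∧ D ≤ θ ∧ θ ≤ D + 1 / (n + 1) := by
    intro n
    have hlt : Dcal s < Dcal s + ENNReal.ofReal (1 / (n + 1)) := by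
      refine ENNReal.lt_add_right hD ?_
      simp [ENNReal.ofReal_eq_zero]
      positivity
    obtain ⟨b, hb, hblt⟩ := sInf_lt_iff.mp (lt_of_le_of_lt le_rfl hlt)
    obtain ⟨θ, ⟨hθpos, hθ0⟩, rfl⟩ := hb
    refine ⟨θ, hθpos, hθ0, ?_, ?_⟩
    · have h1 : Dcal s ≤ ENNReal.ofReal θ := le_Dcal hθpos hθ0
      have := ENNReal.toReal_mono (by finiteness) h1
      simpa [ENNReal.toReal_ofReal hθpos.le] using this
    · have := ENNReal.toReal_mono (by finiteness) hblt.le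
      rw [ENNReal.toReal_ofReal hθpos.le] at this
      refine this.trans ?_
      rw [ENNReal.toReal_add hD (by finiteness), ENNReal.toReal_ofReal (by positivity)]
  choose θseq h1 h2 h3 h4 using key
  have htend : Tendsto θseq atTop (𝓝 D) := by
    refine tendsto_of_tendsto_of_tendsto_of_le_of_le (tendsto_const_nhds) ?_ h3 h4
    have : Tendsto (fun n : ℕ => 1 / ((n:ℝ) + 1)) atTop (𝓝 0) := tendsto_one_div_add_atTop_nhds_zero_nat
    simpa using tendsto_const_nhds.add this
  have hIci : ∀ n, θseq n ∈ Ici (0:ℝ) := fun n => (h1 n).le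
  have hD0 : (0:ℝ) ≤ D := ENNReal.toReal_nonneg
  have hcont := (hsN.cont D hD0).tendsto
  have hs0 : Tendsto (fun n => s (θseq n)) atTop (𝓝 (s D)) :=
    hcont.comp (tendsto_nhdsWithin_iff.2 ⟨htend, Eventually.of_forall hIci⟩)
  have hseq : (fun n => s (θseq n)) = fun _ => (0:ℝ) := funext h2
  rw [hseq] at hs0
  exact (tendsto_nhds_unique hs0 tendsto_const_nhds)


lemma Dcal_toReal_pos (hsN : DistortionData s N) (hD : Dcal s ≠ ⊤) : 0 < (Dcal s).toReal :=
  ENNReal.toReal_pos (Dcal_pos hsN).ne' hD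

lemma tendsto_ratio_atTop (hsN : DistortionData s N) (hD : Dcal s ≠ ⊤) {t : ℝ}
    (ht : t ∈ Set.Ioo (0:ℝ) 1) :
    Tendsto (fun u : ℝ => s (t * u) / s u) (𝓝[<] (Dcal s).toReal) atTop := by
  set D := (Dcal s).toReal with hDdef
  have hDpos : 0 < D := Dcal_toReal_pos hsN hD
  have hmemIoo : Ioo (0:ℝ) D ∈ 𝓝[<] D := Ioo_mem_nhdsLT_of_mem ⟨hDpos, le_rfl⟩
  have hofD : ENNReal.ofReal D = Dcal s := ENNReal.ofReal_toReal hD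
  -- numerator
  have htD : 0 < t * D := mul_pos ht.1 hDpos
  have hnum : Tendsto (fun u : ℝ => s (t * u)) (𝓝[<] D) (𝓝 (s (t * D))) := by
    have h1 : Tendsto (fun u : ℝ => t * u) (𝓝[<] D) (𝓝[Ici 0] (t * D)) := by
      refine tendsto_nhdsWithin_iff.2 ⟨?_, ?_⟩
      · exact ((continuous_const.mul continuous_id).tendsto D).mono_left nhdsWithin_le_nhds
      · filter_upwards [hmemIoo] with u hu using mul_nonneg ht.1.le hu.1.le
    exact ((hsN.cont (t * D) htD.le).tendsto).comp h1
  have hnumpos : 0 < s (t * D) := by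
    refine s_pos_of_lt_Dcal hsN htD ?_
    rw [← hofD]
    exact ENNReal.ofReal_lt_ofReal_iff hDpos |>.2 (by nlinarith [ht.2, hDpos])
  -- denominator
  have hden : Tendsto s (𝓝[<] D) (𝓝[>] 0) := by
    refine tendsto_nhdsWithin_iff.2 ⟨?_, ?_⟩
    · have h1 : Tendsto (fun u : ℝ => u) (𝓝[<] D) (𝓝[Ici 0] D) := by
        refine tendsto_nhdsWithin_iff.2 ⟨tendsto_id.mono_left nhdsWithin_le_nhds, ?_⟩
        filter_upwards [hmemIoo] with u hu using hu.1.le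
      have := ((hsN.cont D hDpos.le).tendsto).comp h1
      rwa [s_Dcal_eq_zero hsN hD] at this
    · filter_upwards [hmemIoo] with u hu
      exact s_pos_of_lt_Dcal hsN hu.1 (hofD ▸ (ENNReal.ofReal_lt_ofReal_iff hDpos).2 hu.2)
  have := Filter.Tendsto.pos_mul_atTop hnumpos hnum (tendsto_inv_nhdsGT_zero.comp hden)
  refine this.congr fun u => ?_
  simp [div_eq_mul_inv, Function.comp]

lemma toReal_tendsto_Dcal (hsN : DistortionData s N) (hD : Dcal s ≠ ⊤) :
    Tendsto (fun φ : ℝ≥0∞ => φ.toReal) (𝓝[<] (Dcal s)) (𝓝[<] (Dcal s).toReal) := by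
  refine tendsto_nhdsWithin_iff.2 ⟨?_, ?_⟩
  · exact (ENNReal.tendsto_toReal hD).mono_left nhdsWithin_le_nhds
  · filter_upwards [self_mem_nhdsWithin] with φ (hφ : φ < Dcal s)
    exact (ENNReal.toReal_lt_toReal (hφ.trans_le le_top).ne hD).2 hφ


lemma beta_top (hsN : DistortionData s N) (hD : Dcal s ≠ ⊤) {t : ℝ}
    (ht : t ∈ Set.Ioo (0:ℝ) 1) {θ : ℝ≥0∞} (hθ : Dcal s ≤ θ) :
    beta s N t θ = ⊤ := by
  have hθ0 : θ ≠ 0 := fun h => (Dcal_pos hsN).not_ge (h ▸ hθ)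
  have hnb : (𝓝[<] (Dcal s)).NeBot := nhdsWithin_Iio_self_neBot' ⟨0, Dcal_pos hsN⟩
  have htop : Tendsto (fun φ : ℝ≥0∞ => ENNReal.ofReal (s (t * φ.toReal) / s φ.toReal))
      (𝓝[<] (Dcal s)) (𝓝 ⊤) :=
    ENNReal.tendsto_ofReal_atTop.comp
      ((tendsto_ratio_atTop hsN hD ht).comp (toReal_tendsto_Dcal hsN hD))
  rw [beta, if_neg hθ0, if_neg (not_lt.2 hθ)]
  exact htop.liminf_eq

lemma beta_lb (hsN : DistortionData s N) (hD : Dcal s ≠ ⊤) {t : ℝ}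
    (ht : t ∈ Set.Ioo (0:ℝ) 1) {δ : ℝ} (hδ : 0 < δ) :
    ∃ c : ℝ, 0 < c ∧ c ≤ 1 ∧ ∀ θ : ℝ≥0∞, ENNReal.ofReal δ ≤ θ →
      ENNReal.ofReal c ≤ beta s N t θ := by
  set D := (Dcal s).toReal with hDdef
  have hDpos : 0 < D := Dcal_toReal_pos hsN hD
  have hofD : ENNReal.ofReal D = Dcal s := ENNReal.ofReal_toReal hD
  by_cases hδD : D ≤ δ
  · refine ⟨1, one_pos, le_rfl, fun θ hθ => ?_⟩
    have : Dcal s ≤ θ := le_trans (hofD ▸ ENNReal.ofReal_le_ofReal hδD) hθ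
    rw [beta_top hsN hD ht this]; exact le_top
  push_neg at hδD
  -- eventually the ratio is ≥ 1 near D
  have hev : ∀ᶠ u in 𝓝[<] D, 1 ≤ s (t * u) / s u :=
    (tendsto_ratio_atTop hsN hD ht).eventually_ge_atTop 1
  obtain ⟨l, hlD, hl⟩ := mem_nhdsLT_iff_exists_Ioo_subset.1 hev
  set b := max l δ with hbdef
  have hbD : b < D := max_lt hlD hδD
  set p := (b + D) / 2 with hpdef
  have hbp : b < p := by simp only [hpdef]; linarith
  have hpD : p < D := by simp only [hpdef]; linarith
  have hδp : δ ≤ p := le_trans (le_max_right l δ) hbp.le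
  -- min of the ratio on [δ, p]
  have hKsub : Icc δ p ⊆ Ici (0:ℝ) := fun z hz => le_trans hδ.le hz.1
  have hspos : ∀ u ∈ Icc δ p, 0 < s u := fun u hu =>
    s_pos_of_lt_Dcal hsN (lt_of_lt_of_le hδ hu.1)
      (hofD ▸ (ENNReal.ofReal_lt_ofReal_iff hDpos).2 (lt_of_le_of_lt hu.2 hpD))
  have hcont : ContinuousOn (fun u : ℝ => s (t * u) / s u) (Icc δ p) := by
    refine ContinuousOn.div ?_ (hsN.cont.mono hKsub) (fun u hu => (hspos u hu).ne')
    refine (hsN.cont.comp ((continuous_const.mul continuous_id).continuousOn) ?_)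
    intro u hu
    exact mul_nonneg ht.1.le (le_trans hδ.le hu.1)
  obtain ⟨u₀, hu₀, hmin⟩ := isCompact_Icc.exists_isMinOn (nonempty_Icc.2 hδp) hcont
  set c₁ := s (t * u₀) / s u₀ with hc₁
  have hc₁pos : 0 < c₁ := by
    refine div_pos ?_ (hspos u₀ hu₀)
    refine s_pos_of_lt_Dcal hsN (mul_pos ht.1 (lt_of_lt_of_le hδ hu₀.1)) ?_
    rw [← hofD]
    refine (ENNReal.ofReal_lt_ofReal_iff hDpos).2 ?_
    nlinarith [hu₀.2, hpD, ht.2, ht.1, hδ, hu₀.1]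
  refine ⟨min c₁ 1, lt_min hc₁pos one_pos, min_le_right _ _, fun θ hθ => ?_⟩
  have hθ0 : θ ≠ 0 := by
    intro h; rw [h, le_zero_iff, ENNReal.ofReal_eq_zero] at hθ; linarith
  by_cases hθD : θ < Dcal s
  · have hθtop : θ ≠ ⊤ := (hθD.trans_le le_top).ne
    have hu1 : δ ≤ θ.toReal := by
      have := ENNReal.toReal_mono hθtop hθ
      rwa [ENNReal.toReal_ofReal hδ.le] at this
    have hu2 : θ.toReal < D := (ENNReal.toReal_lt_toReal hθtop hD).2 hθD
    rw [beta, if_neg hθ0, if_pos hθD]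
    refine ENNReal.ofReal_le_ofReal ?_
    rcases le_or_gt θ.toReal p with hc | hc
    · exact le_trans (min_le_left _ _) (hmin ⟨hu1, hc⟩)
    · have : θ.toReal ∈ Ioo l D := ⟨lt_of_le_of_lt (le_max_left l δ) (hbp.trans hc), hu2⟩
      exact le_trans (min_le_right _ _) (hl this)
  · rw [beta_top hsN hD ht (not_lt.1 hθD)]; exact le_top

end Helpers


section HelpersB

variable [MetricSpace X] [MeasurableSpace X] [BorelSpace X]

lemma mSupp_isClosed (m : Measure X) : IsClosed (mSupp m) := by
  rw [← isOpen_compl_iff, Metric.isOpen_iff]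
  intro z hz
  simp only [mSupp, mem_compl_iff, mem_setOf_eq, not_forall, not_lt] at hz
  obtain ⟨r, hr, hr0⟩ := hz
  refine ⟨r / 2, by linarith, fun y hy => ?_⟩
  simp only [mSupp, mem_compl_iff, mem_setOf_eq, not_forall, not_lt]
  refine ⟨r / 2, by linarith, ?_⟩
  refine le_trans (measure_mono fun w hw => ?_) hr0
  have h1 : dist y z < r / 2 := hy
  have h2 : dist w y < r / 2 := hw
  exact show dist w z < r from (dist_triangle w y z).trans_lt (by linarith)

lemma measure_compl_mSupp [SecondCountableTopology X] (m : Measure X) :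
    m (mSupp m)ᶜ = 0 := by
  have hex : ∀ z : ((mSupp m)ᶜ : Set X), ∃ r : ℝ, 0 < r ∧ m (Metric.ball (z : X) r) = 0 := by
    rintro ⟨z, hz⟩
    simp only [mSupp, mem_compl_iff, mem_setOf_eq, not_forall, not_lt] at hz
    obtain ⟨r, hr, hr0⟩ := hz
    exact ⟨r, hr, le_antisymm hr0 zero_le⟩
  choose r hr hr0 using hex
  obtain ⟨T, hTc, hTeq⟩ :=
    TopologicalSpace.isOpen_iUnion_countable (fun z : ((mSupp m)ᶜ : Set X) => Metric.ball (z : X) (r z))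
      (fun z => isOpen_ball)
  have hsub : (mSupp m)ᶜ ⊆ ⋃ z ∈ T, Metric.ball (z : X) (r z) := by
    rw [hTeq]
    intro z hz
    exact mem_iUnion.2 ⟨⟨z, hz⟩, mem_ball_self (hr ⟨z, hz⟩)⟩
  refine le_antisymm (le_trans (measure_mono hsub) ?_) zero_le
  rw [(measure_biUnion_null_iff hTc).2 fun z _ => hr0 z]

@[simp] lemma epos_coe (x : ℝ) : epos (x : EReal) = ENNReal.ofReal x := by
  simp [epos]

@[simp] lemma epos_top : epos (⊤ : EReal) = ⊤ := by simp [epos]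

@[simp] lemma epos_bot : epos (⊥ : EReal) = 0 := by
  simp [epos]

lemma le_W2sq_dirac [SecondCountableTopology X] (x : X) (ν : Measure X) :
    ∫⁻ y, edist x y ^ 2 ∂ν ≤ W2sq (Measure.dirac x) ν := by
  refine le_iInf fun π => le_iInf fun h1 => le_iInf fun h2 => ?_
  have hmf : Measurable (fun p : X × X => edist p.1 p.2 ^ 2) :=
    (continuous_edist.measurable).pow_const 2
  have hae : ∀ᵐ p ∂π, p.1 = x := by
    have : π.map Prod.fst {x}ᶜ = 0 := by
      rw [h1, Measure.dirac_apply' _ (measurableSet_singleton x).compl]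
      simp
    rw [Measure.map_apply measurable_fst (measurableSet_singleton x).compl] at this
    rw [MeasureTheory.ae_iff]
    exact this
  have hcalc : ∫⁻ y, edist x y ^ 2 ∂ν = ∫⁻ p, edist p.1 p.2 ^ 2 ∂π := by
    calc ∫⁻ y, edist x y ^ 2 ∂ν = ∫⁻ p, edist x p.2 ^ 2 ∂π := by
          have hg : Measurable fun y : X => edist x y ^ 2 :=
            ((continuous_const.edist continuous_id).measurable).pow_const 2
          rw [← h2, lintegral_map hg measurable_snd]
      _ = ∫⁻ p, edist p.1 p.2 ^ 2 ∂π := by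
          refine lintegral_congr_ae ?_
          filter_upwards [hae] with p hp
          rw [hp]
  exact le_of_eq hcalc

lemma W2sq_dirac_le [SecondCountableTopology X] (x : X) (ν : Measure X) [IsProbabilityMeasure ν] :
    W2sq (Measure.dirac x) ν ≤ ∫⁻ y, edist x y ^ 2 ∂ν := by
  have hmf : Measurable (fun p : X × X => edist p.1 p.2 ^ 2) :=
    (continuous_edist.measurable).pow_const 2
  have h1 : ((Measure.dirac x).prod ν).map Prod.fst = Measure.dirac x := by
    rw [Measure.map_fst_prod, measure_univ, one_smul]
  have h2 : ((Measure.dirac x).prod ν).map Prod.snd = ν := by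
    rw [Measure.map_snd_prod, measure_univ, one_smul]
  have h3 : ∫⁻ p, edist p.1 p.2 ^ 2 ∂((Measure.dirac x).prod ν) = ∫⁻ y, edist x y ^ 2 ∂ν := by
    rw [lintegral_prod _ hmf.aemeasurable]
    have hm2 : Measurable fun a : X => ∫⁻ b, edist a b ^ 2 ∂ν :=
      Measurable.lintegral_prod_right (f := fun a b => edist a b ^ 2) hmf
    exact lintegral_dirac' x hm2
  refine le_trans (iInf_le_of_le ((Measure.dirac x).prod ν)
    (iInf_le_of_le h1 (iInf_le_of_le h2 le_rfl))) (le_of_eq h3)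

variable {m : Measure X}

lemma sigmaFinite_of_finiteOnBounded [SecondCountableTopology X] (hm : FiniteOnBounded m) :
    SigmaFinite m := by
  haveI : IsLocallyFiniteMeasure m :=
    ⟨fun x => ⟨Metric.ball x 1, Metric.ball_mem_nhds x one_pos, hm _ Metric.isBounded_ball⟩⟩
  infer_instance

lemma muOne_isProb {A : Set X} (h0 : m A ≠ 0) (hfin : m A ≠ ⊤) :
    IsProbabilityMeasure ((m A)⁻¹ • m.restrict A) := by
  constructor
  rw [Measure.smul_apply, Measure.restrict_apply_univ, smul_eq_mul,
    ENNReal.inv_mul_cancel h0 hfin]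

lemma muOne_apply {A B : Set X} (hBm : MeasurableSet B) :
    ((m A)⁻¹ • m.restrict A) B = (m A)⁻¹ * m (B ∩ A) := by
  rw [Measure.smul_apply, Measure.restrict_apply hBm, smul_eq_mul]

lemma muOne_mSupp_subset {A : Set X} :
    mSupp ((m A)⁻¹ • m.restrict A) ⊆ closure A ∩ mSupp m := by
  intro z hz
  have h : ∀ r : ℝ, 0 < r → 0 < m (Metric.ball z r ∩ A) := by
    intro r hr
    have h1 := hz r hr
    rw [muOne_apply measurableSet_ball] at h1
    by_contra hc
    push_neg at hc
    rw [le_zero_iff.1 hc, mul_zero] at h1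
    exact lt_irrefl _ h1
  constructor
  · rw [Metric.mem_closure_iff]
    intro ε hε
    obtain ⟨w, hw⟩ := nonempty_of_measure_ne_zero (h ε hε).ne'
    exact ⟨w, hw.2, by rw [dist_comm]; exact hw.1⟩
  · intro r hr
    exact lt_of_lt_of_le (h r hr) (measure_mono inter_subset_left)

lemma muOne_ent [SecondCountableTopology X] (hm : FiniteOnBounded m) {A : Set X}
    (hAm : MeasurableSet A) (h0 : m A ≠ 0) (hfin : m A ≠ ⊤) :
    Ent ((m A)⁻¹ • m.restrict A) m = ((- Real.log (m A).toReal : ℝ) : EReal) := by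
  haveI := sigmaFinite_of_finiteOnBounded hm
  set c : ℝ≥0∞ := (m A)⁻¹ with hc
  set μ1 := (m A)⁻¹ • m.restrict A with hμ1
  have hwd : μ1 = m.withDensity (A.indicator fun _ => c) := by
    rw [withDensity_indicator hAm, withDensity_const]
  have hmeas : Measurable (A.indicator fun _ => c) := measurable_const.indicator hAm
  have hrn : μ1.rnDeriv m =ᵐ[m] A.indicator fun _ => c := by
    rw [hwd]; exact Measure.rnDeriv_withDensity m hmeas
  set w := (m A).toReal with hw
  have hwpos : 0 < w := ENNReal.toReal_pos h0 hfin
  have hfun : ∀ x : X, ((A.indicator (fun _ => c) x).toReal) *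
      Real.log ((A.indicator (fun _ => c) x).toReal) =
      A.indicator (fun _ => w⁻¹ * Real.log w⁻¹) x := by
    intro x
    by_cases hx : x ∈ A
    · simp [indicator_of_mem hx, hc, ENNReal.toReal_inv]; rfl
    · simp [indicator_of_notMem hx]
  have haeeq : (fun x => (μ1.rnDeriv m x).toReal * Real.log (μ1.rnDeriv m x).toReal)
      =ᵐ[m] A.indicator fun _ => w⁻¹ * Real.log w⁻¹ := by
    filter_upwards [hrn] with x hx
    rw [hx]; exact hfun x
  have hint2 : Integrable (A.indicator fun _ => w⁻¹ * Real.log w⁻¹) m := by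
    rw [integrable_indicator_iff hAm]
    exact integrableOn_const hfin
  have hint : Integrable
      (fun x => (μ1.rnDeriv m x).toReal * Real.log (μ1.rnDeriv m x).toReal) m :=
    hint2.congr haeeq.symm
  have hac : μ1 ≪ m := hwd ▸ withDensity_absolutelyContinuous m _
  unfold Ent
  rw [if_pos ⟨hac, hint⟩, integral_congr_ae haeeq, integral_indicator_const _ hAm]
  have hval : (m A).toReal • (w⁻¹ * Real.log w⁻¹) = - Real.log w := by
    rw [smul_eq_mul, Real.log_inv, ← hw]
    field_simp
  rw [measureReal_def, hval]

lemma muOne_mem_PbsStar [SecondCountableTopology X] (hm : FiniteOnBounded m) {A : Set X}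
    (hAm : MeasurableSet A) (hAb : Bornology.IsBounded A) (h0 : m A ≠ 0) (hfin : m A ≠ ⊤) :
    ((m A)⁻¹ • m.restrict A) ∈ PbsStar m := by
  refine ⟨⟨muOne_isProb h0 hfin, ?_, fun z hz => (muOne_mSupp_subset hz).2⟩, ?_⟩
  · exact hAb.closure.subset (muOne_mSupp_subset.trans inter_subset_left)
  · rw [muOne_ent hm hAm h0 hfin]
    exact EReal.coe_ne_top _

lemma mul_log_ge_neg_one (r : ℝ) (hr : 0 ≤ r) : -1 ≤ r * Real.log r := by
  rcases eq_or_lt_of_le hr with h | h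
  · simp [← h]
  · have h2 : Real.log r⁻¹ ≤ r⁻¹ - 1 := Real.log_le_sub_one_of_pos (by positivity)
    rw [Real.log_inv] at h2
    have h3 := mul_le_mul_of_nonneg_left h2 hr
    rw [mul_sub, mul_inv_cancel₀ h.ne'] at h3
    nlinarith [h3]

lemma ent_lb [SecondCountableTopology X] {μ : Measure X} [IsProbabilityMeasure μ]
    [SigmaFinite m] (hac : μ ≪ m)
    (hInt : Integrable (fun x => (μ.rnDeriv m x).toReal * Real.log (μ.rnDeriv m x).toReal) m)
    {B T : Set X} (hB : MeasurableSet B) (hT : MeasurableSet T) (hBT : B ⊆ T)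
    (hTfin : m T ≠ ⊤) (hμT : μ Tᶜ = 0) :
    (μ B).toReal * Real.log ((μ B).toReal / (m B).toReal) - (m T).toReal ≤
      ∫ x, (μ.rnDeriv m x).toReal * Real.log (μ.rnDeriv m x).toReal ∂m := by
  set ρ := fun x => (μ.rnDeriv m x).toReal with hρ
  have hBfin : m B ≠ ⊤ := fun h => hTfin (top_le_iff.1 (h ▸ measure_mono hBT))
  have hrn0 : μ.rnDeriv m =ᵐ[m.restrict Tᶜ] 0 := by
    have h1 : ∫⁻ x in Tᶜ, μ.rnDeriv m x ∂m = 0 := by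
      rw [Measure.setLIntegral_rnDeriv hac]; exact hμT
    exact (lintegral_eq_zero_iff (Measure.measurable_rnDeriv μ m)).1 h1
  have hcompl : ∫ x in Tᶜ, ρ x * Real.log (ρ x) ∂m = 0 := by
    have heq : (fun x => ρ x * Real.log (ρ x)) =ᵐ[m.restrict Tᶜ] 0 := by
      filter_upwards [hrn0] with x hx
      simp [hρ, hx]
    rw [integral_congr_ae heq]
    simp
  have hsplit : ∫ x, ρ x * Real.log (ρ x) ∂m
      = ∫ x in T, ρ x * Real.log (ρ x) ∂m + ∫ x in Tᶜ, ρ x * Real.log (ρ x) ∂m :=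
    (integral_add_compl hT hInt).symm
  have hsplit2 : ∫ x in T, ρ x * Real.log (ρ x) ∂m
      = ∫ x in B, ρ x * Real.log (ρ x) ∂m + ∫ x in T \ B, ρ x * Real.log (ρ x) ∂m := by
    rw [← setIntegral_union Set.disjoint_sdiff_right (hT.diff hB)
      hInt.integrableOn hInt.integrableOn, union_diff_cancel hBT]
  have h3 : -(m T).toReal ≤ ∫ x in T \ B, ρ x * Real.log (ρ x) ∂m := by
    have hfin' : m (T \ B) < ⊤ := lt_of_le_of_lt (measure_mono diff_subset)
      (lt_top_iff_ne_top.2 hTfin)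
    have hmono := setIntegral_mono_on (f := fun _ => (-1 : ℝ))
      (integrableOn_const hfin'.ne) hInt.integrableOn (hT.diff hB)
      (fun x _ => mul_log_ge_neg_one (ρ x) ENNReal.toReal_nonneg)
    rw [setIntegral_const] at hmono
    refine le_trans ?_ hmono
    have := ENNReal.toReal_mono hTfin (measure_mono (diff_subset : T \ B ⊆ T))
    simp only [smul_eq_mul, mul_neg_one, measureReal_def]
    linarith
  have h4 : (μ B).toReal * Real.log ((μ B).toReal / (m B).toReal)
      ≤ ∫ x in B, ρ x * Real.log (ρ x) ∂m := by
    by_cases h0 : m B = 0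
    · rw [hac h0, Measure.restrict_eq_zero.2 h0]
      simp
    · haveI : IsFiniteMeasure (m.restrict B) :=
        ⟨by rw [Measure.restrict_apply_univ]; exact lt_top_iff_ne_top.2 hBfin⟩
      haveI : NeZero (m.restrict B) := ⟨fun h => h0 (by
        rw [← Measure.restrict_apply_univ B (μ := m), h]; simp)⟩
      have hJ : (⨍ x in B, ρ x ∂m) * Real.log (⨍ x in B, ρ x ∂m)
          ≤ ⨍ x in B, ρ x * Real.log (ρ x) ∂m :=
        Real.convexOn_mul_log.map_average_le Real.continuous_mul_log.continuousOn
          isClosed_Ici (ae_of_all _ fun x => ENNReal.toReal_nonneg)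
          (Measure.integrable_toReal_rnDeriv.integrableOn) (hInt.integrableOn)
      have hwpos : 0 < (m B).toReal := ENNReal.toReal_pos h0 hBfin
      have havg : ⨍ x in B, ρ x ∂m = (μ B).toReal / (m B).toReal := by
        rw [average_eq, measureReal_restrict_apply_univ, Measure.setIntegral_toReal_rnDeriv hac B,
          smul_eq_mul]
        simp only [measureReal_def]
        ring
      have havg2 : ⨍ x in B, ρ x * Real.log (ρ x) ∂m
          = (m B).toReal⁻¹ * ∫ x in B, ρ x * Real.log (ρ x) ∂m := by
        rw [average_eq, measureReal_restrict_apply_univ, smul_eq_mul, measureReal_def]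
      rw [havg, havg2] at hJ
      have h5 := mul_le_mul_of_nonneg_left hJ hwpos.le
      have he1 : (m B).toReal * ((μ B).toReal / (m B).toReal *
          Real.log ((μ B).toReal / (m B).toReal))
          = (μ B).toReal * Real.log ((μ B).toReal / (m B).toReal) := by
        field_simp
      have he2 : (m B).toReal * ((m B).toReal⁻¹ * ∫ x in B, ρ x * Real.log (ρ x) ∂m)
          = ∫ x in B, ρ x * Real.log (ρ x) ∂m := by
        field_simp
      rw [he1, he2] at h5
      exact h5
  linarith [hsplit, hsplit2, hcompl, h3, h4]

lemma UnE_one {μ mm : Measure X} {e : ℝ} (h : Ent μ mm = (e : EReal)) :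
    UnE 1 μ mm = ENNReal.ofReal (Real.exp (-e)) := by
  unfold UnE
  rw [h, ← EReal.coe_neg, inv_one, EReal.coe_one, one_mul, EReal.exp_coe]

lemma Ent_ne_bot (μ mm : Measure X) : Ent μ mm ≠ ⊥ := by
  unfold Ent
  split_ifs
  · exact EReal.coe_ne_bot _
  · simp

lemma UnE_one_ne_top (μ mm : Measure X) : UnE 1 μ mm ≠ ⊤ := by
  unfold UnE
  rw [inv_one, EReal.coe_one, one_mul]
  intro h
  rw [EReal.exp_eq_top_iff, EReal.neg_eq_top_iff] at h
  exact Ent_ne_bot μ mm h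

end HelpersB

set_option maxHeartbeats 1600000 in
/-- Bonnet–Myers type theorem. -/
theorem bonnet_myers {X : Type*} [MetricSpace X] [MeasurableSpace X]
    [BorelSpace X] [CompleteSpace X] [TopologicalSpace.SeparableSpace X]
    (m : Measure X) (hm : FiniteOnBounded m) (G : X → X → ℝ≥0∞)
    (s : ℝ → ℝ) (N : ℝ) (hsN : DistortionData s N)
    (hMCP : MCP m G (beta s N))
    (hGd : ∀ x y : X, edist x y ≤ G x y) :
    EMetric.diam (mSupp m) ≤ Dcal s ∧ (Dcal s < ⊤ → IsCompact (mSupp m)) := by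
  haveI hSC : SecondCountableTopology X := UniformSpace.secondCountable_of_separable X
  haveI hSF : SigmaFinite m := sigmaFinite_of_finiteOnBounded hm
  have hdiam : EMetric.diam (mSupp m) ≤ Dcal s := by
    by_cases hD : Dcal s = ⊤
    · rw [hD]; exact le_top
    refine EMetric.diam_le fun x hx y hy => ?_
    by_contra hgt
    push_neg at hgt
    set D := (Dcal s).toReal with hDdef
    have hofD : ENNReal.ofReal D = Dcal s := ENNReal.ofReal_toReal hD
    have hD0 : (0:ℝ) ≤ D := ENNReal.toReal_nonneg
    have hdxy : D < dist x y := by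
      have h1 := (ENNReal.toReal_lt_toReal hD (edist_ne_top x y)).2 hgt
      rwa [edist_dist, ENNReal.toReal_ofReal dist_nonneg] at h1
    set r := (dist x y - D) / 2 with hr
    have hrpos : 0 < r := by rw [hr]; linarith
    have hsum : dist x y = D + 2 * r := by rw [hr]; ring
    set B := Metric.ball y r with hB
    have hBm0 : m B ≠ 0 := (hy r hrpos).ne'
    have hBfin : m B ≠ ⊤ := (hm _ Metric.isBounded_ball).ne
    set μ1 := (m B)⁻¹ • m.restrict B with hμ1
    have hμ1star : μ1 ∈ PbsStar m :=
      muOne_mem_PbsStar hm measurableSet_ball Metric.isBounded_ball hBm0 hBfin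
    have hxnot : x ∉ mSupp μ1 := by
      intro hxm
      have h1 := (muOne_mSupp_subset hxm).1
      have hxc : x ∈ Metric.closedBall y r := closure_ball_subset_closedBall h1
      rw [Metric.mem_closedBall] at hxc
      linarith
    obtain ⟨μgeo, hW2, hg0, hg1, hineq⟩ := hMCP x hx μ1 hμ1star hxnot
    have h12 := hineq (1/2) ⟨by norm_num, by norm_num⟩ 1 le_rfl
    have hbtop : ∀ z ∈ B, ENNReal.log (beta s N (1/2) (G x z)) = (⊤ : EReal) := by
      intro z hz
      rw [beta_top hsN hD ⟨by norm_num, by norm_num⟩ ?_, ENNReal.log_top]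
      refine le_trans ?_ (hGd x z)
      rw [edist_dist, ← hofD]
      refine ENNReal.ofReal_le_ofReal ?_
      have h1 : dist z y < r := hz
      nlinarith [dist_triangle x z y, hrpos]
    have hμ1B : μ1 B = 1 := by
      rw [hμ1, muOne_apply measurableSet_ball, Set.inter_self,
        ENNReal.inv_mul_cancel hBm0 hBfin]
    have hμ1Bc : μ1 Bᶜ = 0 := by
      rw [hμ1, muOne_apply measurableSet_ball.compl, compl_inter_self, measure_empty, mul_zero]
    have heint : eintegral μ1 (fun z => ENNReal.log (beta s N (1/2) (G x z))) = ⊤ := by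
      have hmono : ∀ z, B.indicator (fun _ => (⊤:ℝ≥0∞)) z ≤
          epos (ENNReal.log (beta s N (1/2) (G x z))) := by
        intro z
        by_cases hz : z ∈ B
        · rw [indicator_of_mem hz, hbtop z hz, epos_top]
        · rw [indicator_of_notMem hz]; exact zero_le
      have hind : ∫⁻ z, B.indicator (fun _ => (⊤:ℝ≥0∞)) z ∂μ1 = ⊤ := by
        rw [lintegral_indicator measurableSet_ball, setLIntegral_const, hμ1B, mul_one]
      have hpos : ∫⁻ z, epos (ENNReal.log (beta s N (1/2) (G x z))) ∂μ1 = ⊤ :=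
        top_le_iff.1 (hind ▸ lintegral_mono hmono)
      have hneg : ∫⁻ z, epos (-(ENNReal.log (beta s N (1/2) (G x z)))) ∂μ1 = 0 := by
        have hz0 : (fun z => epos (-(ENNReal.log (beta s N (1/2) (G x z)))))
            =ᵐ[μ1] fun _ => 0 := by
          filter_upwards [(MeasureTheory.mem_ae_iff.2 hμ1Bc : B ∈ ae μ1)] with z hz
          rw [hbtop z hz, EReal.neg_top, epos_bot]
        rw [lintegral_congr_ae hz0, lintegral_zero]
      rw [eintegral, hpos, hneg, EReal.coe_ennreal_top, EReal.coe_ennreal_zero,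
        ← EReal.coe_zero, EReal.top_sub_coe]
    rw [heint] at h12
    have hUnE1 : UnE 1 μ1 m ≠ 0 := by
      rw [UnE_one (muOne_ent hm measurableSet_ball hBm0 hBfin)]
      positivity
    rw [show (((1:ℝ)⁻¹ : ℝ) : EReal) = 1 by norm_num, one_mul, EReal.exp_top,
      ENNReal.top_mul hUnE1, top_le_iff] at h12
    exact UnE_one_ne_top _ _ h12
  refine ⟨hdiam, fun hDlt => ?_⟩
  have hD : Dcal s ≠ ⊤ := hDlt.ne
  set S := mSupp m with hSdef
  have hSclosed : IsClosed S := mSupp_isClosed m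
  have hSmeas : MeasurableSet S := hSclosed.measurableSet
  have hScompl : m Sᶜ = 0 := measure_compl_mSupp m
  have hSbdd : Bornology.IsBounded S :=
    Metric.isBounded_iff_ediam_ne_top.2 (fun h => hD (top_le_iff.1 (h ▸ hdiam)))
  rcases eq_empty_or_nonempty S with hSe | ⟨x₀, hx₀⟩
  · rw [hSe]; exact isCompact_empty
  have hSfin : m S ≠ ⊤ := (hm S hSbdd).ne
  have hSpos : m S ≠ 0 := by
    intro h
    have h1 : m (Metric.ball x₀ 1) ≤ m S + m Sᶜ := by
      refine le_trans (measure_mono (subset_univ _)) ?_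
      rw [← union_compl_self S]
      exact measure_union_le _ _
    rw [h, hScompl, add_zero, le_zero_iff] at h1
    exact (hx₀ 1 one_pos).ne' h1
  set R := Metric.diam S + 1 with hRdef
  have hRpos : 0 < R := by
    have := Metric.diam_nonneg (s := S); linarith
  have hdistS : ∀ x ∈ S, ∀ z ∈ S, dist x z ≤ R := fun x hx z hz =>
    (Metric.dist_le_diam_of_mem hSbdd hx hz).trans (by linarith)
  -- KEY : uniform lower bound on measures of balls centered in S
  have hball : ∀ ε : ℝ, 0 < ε → ∃ κ : ℝ≥0∞, 0 < κ ∧ ∀ x ∈ S, κ ≤ m (Metric.ball x ε) := by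
    intro ε hε
    set t : ℝ := min (1/2) (ε/(8*R)) with htdef
    have ht0 : 0 < t := lt_min (by norm_num) (by positivity)
    have ht1 : t < 1 := lt_of_le_of_lt (min_le_left _ _) (by norm_num)
    have htmem : t ∈ Set.Ioo (0:ℝ) 1 := ⟨ht0, ht1⟩
    have ha4 : 2*t*R ≤ ε/4 := by
      have h1 := min_le_right (1/2) (ε/(8*R))
      have h2 : 2*t*R ≤ 2*(ε/(8*R))*R := by nlinarith
      calc 2*t*R ≤ 2*(ε/(8*R))*R := h2
        _ = ε/4 := by field_simp; ring
    obtain ⟨c, hc0, hc1, hcβ⟩ := beta_lb hsN hD htmem (show (0:ℝ) < ε/4 by positivity)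
    set W := Metric.ball x₀ (R + ε + 1) with hWdef
    have hWfin : m W ≠ ⊤ := (hm _ Metric.isBounded_ball).ne
    set σ2 := (m S / 2).toReal with hσ2
    have hmS2top : m S / 2 ≠ ⊤ := by
      simp [ENNReal.div_eq_top, hSfin]
    have hσ2pos : 0 < σ2 := ENNReal.toReal_pos
      (by simp [ENNReal.div_eq_zero_iff, hSpos]) hmS2top
    set E₀ : ℝ := -Real.log (c * σ2) with hE₀
    set E₁ : ℝ := max (E₀ + (m W).toReal) 0 with hE₁
    have hE₁0 : 0 ≤ E₁ := le_max_right _ _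
    set κr : ℝ := min (3/8) ((3/4) * Real.exp (-(4/3) * E₁)) with hκr
    have hκrpos : 0 < κr := lt_min (by norm_num) (by positivity)
    refine ⟨min (m S / 2) (ENNReal.ofReal κr), lt_min ?_ ?_, ?_⟩
    · exact ENNReal.div_pos hSpos (by norm_num)
    · simpa using hκrpos
    intro x hx
    by_cases hcase : m (S \ Metric.ball x (ε/4)) < m S / 2
    · -- small annulus : the ball ε/4 already carries half the mass
      have h1 : m S ≤ m (S \ Metric.ball x (ε/4)) + m (Metric.ball x (ε/4)) := by
        refine le_trans (measure_mono ?_) (measure_union_le _ _)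
        intro z hz
        by_cases h : z ∈ Metric.ball x (ε/4)
        · exact Or.inr h
        · exact Or.inl ⟨hz, h⟩
      have h2 : m S / 2 ≤ m (Metric.ball x (ε/4)) := by
        by_contra hq
        push_neg at hq
        have h3 := ENNReal.add_lt_add hcase hq
        rw [ENNReal.add_halves] at h3
        exact absurd h1 (not_le.2 h3)
      exact le_trans (min_le_left _ _)
        (h2.trans (measure_mono (Metric.ball_subset_ball (by linarith))))
    push_neg at hcase
    set A := S \ Metric.ball x (ε/4) with hAdef
    have hAmeas : MeasurableSet A := hSmeas.diff measurableSet_ball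
    have hAbdd : Bornology.IsBounded A := hSbdd.subset diff_subset
    have hA0 : m A ≠ 0 := by
      intro h
      rw [h, le_zero_iff] at hcase
      exact hSpos (by simpa [ENNReal.div_eq_zero_iff] using hcase)
    have hAfin : m A ≠ ⊤ := (hm A hAbdd).ne
    set μ1 := (m A)⁻¹ • m.restrict A with hμ1def
    have hμ1star : μ1 ∈ PbsStar m := muOne_mem_PbsStar hm hAmeas hAbdd hA0 hAfin
    haveI : IsProbabilityMeasure μ1 := muOne_isProb hA0 hAfin
    have hxnot : x ∉ mSupp μ1 := by
      intro hxm
      have h1 := (muOne_mSupp_subset hxm).1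
      have h2 : closure A ⊆ (Metric.ball x (ε/4))ᶜ :=
        closure_minimal (fun z hz => hz.2) isOpen_ball.isClosed_compl
      exact (h2 h1) (Metric.mem_ball_self (by positivity))
    obtain ⟨μgeo, hW2geo, hg0, hg1, hineq⟩ := hMCP x hx μ1 hμ1star hxnot
    have hiq := hineq t htmem 1 le_rfl
    have hμ1Ac : μ1 Aᶜ = 0 := by
      rw [hμ1def, muOne_apply hAmeas.compl, compl_inter_self, measure_empty, mul_zero]
    have hAae : A ∈ ae μ1 := MeasureTheory.mem_ae_iff.2 hμ1Ac
    -- lower bound for the eintegral term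
    set L := Real.log c with hLdef
    have hLle : L ≤ 0 := Real.log_nonpos hc0.le hc1
    have hflb : ∀ z ∈ A, (L : EReal) ≤ ENNReal.log (beta s N t (G x z)) := by
      intro z hz
      have hGz : ENNReal.ofReal (ε/4) ≤ G x z := by
        refine le_trans ?_ (hGd x z)
        rw [edist_dist]
        refine ENNReal.ofReal_le_ofReal ?_
        have h3 : z ∉ Metric.ball x (ε/4) := hz.2
        rw [Metric.mem_ball, not_lt, dist_comm] at h3
        exact h3
      have h2 := ENNReal.log_monotone (hcβ (G x z) hGz)
      rwa [ENNReal.log_ofReal, if_neg (not_le.2 hc0)] at h2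
    have heps : ∀ᵐ z ∂μ1, epos (-(ENNReal.log (beta s N t (G x z))))
        ≤ ENNReal.ofReal (-L) := by
      filter_upwards [hAae] with z hz
      have h1 : -(ENNReal.log (beta s N t (G x z))) ≤ ((-L : ℝ) : EReal) := by
        rw [EReal.coe_neg]
        exact EReal.neg_le_neg_iff.2 (hflb z hz)
      unfold epos
      split_ifs with h2
      · rw [h2] at h1
        exact absurd h1 (by simp [EReal.coe_neg])
      · refine ENNReal.ofReal_le_ofReal ?_
        by_cases h3 : -(ENNReal.log (beta s N t (G x z))) = ⊥
        · rw [h3]; simpa using (neg_nonneg.2 hLle)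
        · have := EReal.toReal_le_toReal h1 h3 (EReal.coe_ne_top _)
          simpa using this
    have hIneg : ∫⁻ z, epos (-(ENNReal.log (beta s N t (G x z)))) ∂μ1
        ≤ ENNReal.ofReal (-L) := by
      calc ∫⁻ z, epos (-(ENNReal.log (beta s N t (G x z)))) ∂μ1
          ≤ ∫⁻ _, ENNReal.ofReal (-L) ∂μ1 := lintegral_mono_ae heps
        _ = ENNReal.ofReal (-L) := by rw [lintegral_const, measure_univ, mul_one]
    have heint : (L : EReal) ≤ eintegral μ1 (fun z => ENNReal.log (beta s N t (G x z))) := by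
      unfold eintegral
      have h1 : ((∫⁻ z, epos (-(ENNReal.log (beta s N t (G x z)))) ∂μ1 : ℝ≥0∞) : EReal)
          ≤ ((-L : ℝ) : EReal) := by
        refine le_trans (EReal.coe_ennreal_le_coe_ennreal_iff.2 hIneg) ?_
        rw [EReal.coe_ennreal_ofReal]
        simp [max_le_iff, neg_nonneg.2 hLle]
      have h2 : (0 : EReal) ≤
          ((∫⁻ z, epos (ENNReal.log (beta s N t (G x z))) ∂μ1 : ℝ≥0∞) : EReal) := by
        exact EReal.coe_ennreal_nonneg _
      calc (L : EReal) = (0:EReal) - ((-L : ℝ) : EReal) := by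
            rw [zero_sub, ← EReal.coe_neg, neg_neg]
        _ ≤ _ := EReal.sub_le_sub h2 h1
    -- coefficient lower bound
    have hcoef : ENNReal.ofReal c ≤ EReal.exp ((((1:ℝ)⁻¹ : ℝ) : EReal) *
        eintegral μ1 (fun z => ENNReal.log (beta s N t (G x z)))) := by
      rw [show (((1:ℝ)⁻¹ : ℝ) : EReal) = 1 by norm_num, one_mul]
      calc ENNReal.ofReal c = EReal.exp (L : EReal) := by
            rw [EReal.exp_coe, Real.exp_log hc0]
        _ ≤ _ := EReal.exp_monotone heint
    have hAt : 0 < (m A).toReal := ENNReal.toReal_pos hA0 hAfin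
    have hUnμ1 : UnE 1 μ1 m = m A := by
      rw [UnE_one (muOne_ent hm hAmeas hA0 hAfin), neg_neg, Real.exp_log hAt,
        ENNReal.ofReal_toReal hAfin]
    have hlow : ENNReal.ofReal c * (m S / 2) ≤ UnE 1 (μgeo t) m := by
      refine le_trans ?_ hiq
      rw [hUnμ1]
      exact mul_le_mul' hcoef hcase
    have hκ1pos : (0:ℝ≥0∞) < ENNReal.ofReal c * (m S / 2) :=
      ENNReal.mul_pos (by simp [hc0]) (ENNReal.div_pos hSpos (by norm_num)).ne'
    set ν := μgeo t with hνdef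
    haveI : IsProbabilityMeasure ν := hW2geo.prob t ⟨ht0.le, ht1.le⟩
    have hEnttop : Ent ν m ≠ ⊤ := by
      intro h
      have : UnE 1 ν m = 0 := by
        unfold UnE
        rw [h, inv_one, EReal.coe_one, one_mul, EReal.neg_top, EReal.exp_bot]
      rw [this] at hlow
      exact absurd (le_antisymm hlow zero_le) hκ1pos.ne'
    have hcond : ν ≪ m ∧ Integrable
        (fun x => (ν.rnDeriv m x).toReal * Real.log (ν.rnDeriv m x).toReal) m := by
      by_contra hcn
      refine hEnttop ?_
      unfold Ent
      rw [if_neg hcn]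
    obtain ⟨hνac, hνint⟩ := hcond
    set e := ∫ x, (ν.rnDeriv m x).toReal * Real.log (ν.rnDeriv m x).toReal ∂m with hedef
    have hEntval : Ent ν m = (e : EReal) := by
      unfold Ent
      rw [if_pos ⟨hνac, hνint⟩]
    -- numeric upper bound on e
    have hebound : e ≤ E₀ := by
      have h1 : UnE 1 ν m = ENNReal.ofReal (Real.exp (-e)) := UnE_one hEntval
      rw [h1] at hlow
      have h2 : m S / 2 = ENNReal.ofReal σ2 := (ENNReal.ofReal_toReal hmS2top).symm
      rw [h2, ← ENNReal.ofReal_mul hc0.le] at hlow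
      have h3 : c * σ2 ≤ Real.exp (-e) :=
        (ENNReal.ofReal_le_ofReal_iff (Real.exp_nonneg _)).1 hlow
      have h4 : Real.log (c * σ2) ≤ -e :=
        (Real.log_le_iff_le_exp (by positivity)).2 h3
      rw [hE₀]; linarith
    -- Chebyshev concentration
    set a : ℝ := 2*t*R with hadef
    have hapos : 0 < a := by positivity
    have hW2μt : W2sq (μgeo 0) (μgeo t) = ENNReal.ofReal ((0 - t)^2) * W2sq (μgeo 0) (μgeo 1) :=
      hW2geo.geo 0 ⟨le_rfl, zero_le_one⟩ t ⟨ht0.le, ht1.le⟩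
    have hub : W2sq (μgeo 0) (μgeo 1) ≤ ENNReal.ofReal (R^2) := by
      rw [hg0, hg1]
      refine le_trans (W2sq_dirac_le x μ1) ?_
      have hbd : ∀ᵐ y ∂μ1, edist x y ^ 2 ≤ ENNReal.ofReal (R^2) := by
        filter_upwards [hAae] with y hy
        have h1 : dist x y ≤ R := hdistS x hx y hy.1
        rw [edist_dist, ← ENNReal.ofReal_pow dist_nonneg]
        exact ENNReal.ofReal_le_ofReal (by nlinarith [dist_nonneg (x := x) (y := y)])
      calc ∫⁻ y, edist x y ^ 2 ∂μ1 ≤ ∫⁻ _, ENNReal.ofReal (R^2) ∂μ1 := lintegral_mono_ae hbd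
        _ = ENNReal.ofReal (R^2) := by rw [lintegral_const, measure_univ, mul_one]
    have hlow2 : ∫⁻ y, edist x y ^ 2 ∂ν ≤ ENNReal.ofReal (t^2 * R^2) := by
      refine le_trans (le_W2sq_dirac x ν) ?_
      rw [hνdef, ← hg0, hW2μt]
      calc ENNReal.ofReal ((0 - t)^2) * W2sq (μgeo 0) (μgeo 1)
          ≤ ENNReal.ofReal ((0 - t)^2) * ENNReal.ofReal (R^2) := mul_le_mul_right hub _
        _ = ENNReal.ofReal (t^2 * R^2) := by
            rw [← ENNReal.ofReal_mul (by positivity)]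
            ring_nf
    set q := ENNReal.ofReal (t^2 * R^2) with hqdef
    have hq0 : q ≠ 0 := by simp [hqdef, ENNReal.ofReal_eq_zero, not_le]; positivity
    have hqtop : q ≠ ⊤ := ENNReal.ofReal_ne_top
    have hcheb : ν (Metric.ball x a)ᶜ ≤ 1/4 := by
      have h1 : ENNReal.ofReal (a^2) * ν {y | ENNReal.ofReal (a^2) ≤ edist x y ^ 2}
          ≤ ∫⁻ y, edist x y ^ 2 ∂ν :=
        mul_meas_ge_le_lintegral₀
          (((continuous_const.edist continuous_id).measurable.pow_const 2).aemeasurable) _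
      have h2 : (Metric.ball x a)ᶜ ⊆ {y | ENNReal.ofReal (a^2) ≤ edist x y ^ 2} := by
        intro y hy
        rw [mem_compl_iff, Metric.mem_ball, not_lt] at hy
        rw [mem_setOf_eq, edist_dist, ← ENNReal.ofReal_pow dist_nonneg]
        refine ENNReal.ofReal_le_ofReal ?_
        have h3 : 0 ≤ dist y x := dist_nonneg
        rw [dist_comm]
        nlinarith
      have h4 : ENNReal.ofReal (a^2) = 4 * q := by
        rw [hqdef, ← ENNReal.ofReal_ofNat, ← ENNReal.ofReal_mul (by norm_num)]
        congr 1
        rw [hadef]; ring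
      have h5 : 4 * q * ν (Metric.ball x a)ᶜ ≤ q := by
        calc 4 * q * ν (Metric.ball x a)ᶜ ≤ 4 * q * ν {y | ENNReal.ofReal (a^2) ≤ edist x y ^ 2} :=
              mul_le_mul_right (measure_mono h2) _
          _ ≤ q := by rw [← h4]; exact h1.trans hlow2
      have h6 : ν (Metric.ball x a)ᶜ * 4 ≤ 1 := by
        refine (ENNReal.mul_le_mul_iff_left hq0 hqtop).1 ?_
        rw [one_mul]
        calc ν (Metric.ball x a)ᶜ * 4 * q = 4 * q * ν (Metric.ball x a)ᶜ := by ring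
          _ ≤ q := h5
      exact (ENNReal.le_div_iff_mul_le (Or.inl (by norm_num)) (Or.inl (by norm_num))).2 h6
    set B := Metric.ball x a with hBdef
    have hνB : (3/4 : ℝ≥0∞) ≤ ν B := by
      have h1 : ν Bᶜ = 1 - ν B := prob_compl_eq_one_sub measurableSet_ball
      have h2 : (1:ℝ≥0∞) - 1/4 ≤ 1 - ν Bᶜ := tsub_le_tsub_left hcheb 1
      rw [h1, ENNReal.sub_sub_cancel one_ne_top prob_le_one] at h2
      refine le_trans ?_ h2
      refine le_of_eq (ENNReal.sub_eq_of_eq_add (by norm_num) ?_).symm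
      rw [ENNReal.div_add_div_same, show (3+1:ℝ≥0∞) = 4 by norm_num,
        ENNReal.div_self (by norm_num) (by norm_num)]
    -- Jensen : lower bound on m B
    set T := S ∪ B with hTdef
    have hTmeas : MeasurableSet T := hSmeas.union measurableSet_ball
    have hTW : T ⊆ W := by
      rintro z (hz | hz)
      · exact Metric.mem_ball.2 (lt_of_le_of_lt (hdistS z hz x₀ hx₀) (by linarith))
      · have h1 : dist z x < a := hz
        have h2 : dist x x₀ ≤ R := hdistS x hx x₀ hx₀
        refine Metric.mem_ball.2 (lt_of_le_of_lt (dist_triangle z x x₀) ?_)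
        have : a ≤ ε/4 := ha4
        linarith
    have hTfin : m T ≠ ⊤ := fun h => hWfin (top_le_iff.1 (h ▸ measure_mono hTW))
    have hνTc : ν Tᶜ = 0 := by
      refine le_antisymm (le_trans (measure_mono ?_) (le_of_eq (hνac hScompl))) zero_le
      exact compl_subset_compl.2 subset_union_left
    have hjensen := ent_lb hνac hνint measurableSet_ball hTmeas subset_union_right hTfin hνTc
    rw [← hedef] at hjensen
    set u := (ν B).toReal with hu
    set b := (m B).toReal with hb
    have hBfin : m B ≠ ⊤ := fun h => hTfin (top_le_iff.1 (h ▸ measure_mono subset_union_right))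
    have hu34 : 3/4 ≤ u := by
      have := ENNReal.toReal_mono (measure_ne_top ν B) hνB
      simpa using this
    have hu1 : u ≤ 1 := by
      have := ENNReal.toReal_mono (measure_ne_top ν univ) (measure_mono (subset_univ B))
      simpa using this
    have hbpos : 0 < b := by
      refine ENNReal.toReal_pos ?_ hBfin
      intro h
      have : ν B = 0 := hνac h
      rw [this] at hνB
      simpa using hνB
    have hmTW : (m T).toReal ≤ (m W).toReal := ENNReal.toReal_mono hWfin (measure_mono hTW)
    have hkey : u * Real.log (u / b) ≤ E₁ := by
      have h1 : u * Real.log (u / b) - (m T).toReal ≤ e := hjensen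
      have h2 : u * Real.log (u / b) ≤ e + (m W).toReal := by linarith
      refine le_trans h2 ?_
      rw [hE₁]
      refine le_max_of_le_left ?_
      linarith [hebound]
    have hbge : κr ≤ b := by
      by_cases hb38 : 3/8 ≤ b
      · exact le_trans (min_le_left _ _) hb38
      push_neg at hb38
      have hM : (0:ℝ) < Real.exp ((4/3) * E₁) := Real.exp_pos _
      have hub2 : 1 < (3/4) / b := by
        rw [lt_div_iff₀ hbpos]; linarith
      have hlog1 : 0 ≤ Real.log ((3/4) / b) := Real.log_nonneg hub2.le
      have hmono : Real.log ((3/4) / b) ≤ Real.log (u / b) := by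
        refine Real.log_le_log (by positivity) ?_
        gcongr
      have hchain : (3/4) * Real.log ((3/4)/b) ≤ E₁ := by
        have h1 : (3/4) * Real.log ((3/4)/b) ≤ u * Real.log (u/b) :=
          mul_le_mul hu34 hmono hlog1 (by linarith)
        linarith [hkey]
      have h2 : Real.log ((3/4)/b) ≤ (4/3) * E₁ := by linarith
      have h3 : (3/4)/b ≤ Real.exp ((4/3) * E₁) := (Real.log_le_iff_le_exp (by positivity)).1 h2
      set M := Real.exp ((4/3) * E₁) with hMdef
      have h5 : (3:ℝ)/4 ≤ M * b := by
        rw [div_le_iff₀ hbpos] at h3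
        linarith
      have h6 : (3/4) * M⁻¹ ≤ (M * b) * M⁻¹ :=
        mul_le_mul_of_nonneg_right h5 (inv_nonneg.2 hM.le)
      have h7 : (M * b) * M⁻¹ = b := by
        rw [mul_comm M b, mul_assoc, mul_inv_cancel₀ hM.ne', mul_one]
      have h8 : (3/4) * Real.exp (-(4/3) * E₁) ≤ b := by
        rw [show -(4/3) * E₁ = -((4/3) * E₁) by ring, Real.exp_neg, ← hMdef]
        linarith [h6, h7]
      exact le_trans (min_le_right _ _) h8
    have hfinal : ENNReal.ofReal κr ≤ m (Metric.ball x ε) := by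
      refine le_trans (ENNReal.ofReal_le_ofReal hbge) ?_
      rw [hb, ENNReal.ofReal_toReal hBfin]
      refine measure_mono (Metric.ball_subset_ball ?_)
      have : a ≤ ε/4 := ha4
      linarith
    exact le_trans (min_le_right _ _) hfinal
  -- totally bounded
  have hTB : TotallyBounded S := by
    rw [Metric.totallyBounded_iff]
    intro ε hε
    by_contra hno
    push_neg at hno
    obtain ⟨κ, hκ0, hκ⟩ := hball (ε/2) (by positivity)
    haveI : Std.Symm (α := X) (fun a b => ε ≤ dist a b) := ⟨fun a b h => by rwa [dist_comm]⟩
    have hseq : ∃ u : ℕ → X, (∀ n, u n ∈ S) ∧ Pairwise (Function.onFun (fun a b => ε ≤ dist a b) u) := by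
      refine exists_seq_of_forall_finset_exists' (fun z => z ∈ S) (fun a b => ε ≤ dist a b) ?_
      intro f hf
      obtain ⟨z, hzS, hz⟩ := not_subset.1 (hno ↑f f.finite_toSet)
      refine ⟨z, hzS, fun w hw => ?_⟩
      by_contra hq
      push_neg at hq
      exact hz (mem_biUnion hw (by rw [Metric.mem_ball, dist_comm]; exact hq))
    obtain ⟨u, huS, husep⟩ := hseq
    have hdisj : Pairwise (Function.onFun Disjoint fun n => Metric.ball (u n) (ε/2)) := by
      intro i j hij
      exact Metric.ball_disjoint_ball (by linarith [husep hij])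
    have hsum : m (⋃ n, Metric.ball (u n) (ε/2)) = ∑' n, m (Metric.ball (u n) (ε/2)) :=
      measure_iUnion hdisj fun n => measurableSet_ball
    have htop : m (⋃ n, Metric.ball (u n) (ε/2)) = ⊤ := by
      rw [hsum]
      refine top_le_iff.1 ?_
      calc (⊤:ℝ≥0∞) = ∑' _ : ℕ, κ := (ENNReal.tsum_const_eq_top_of_ne_zero hκ0.ne').symm
        _ ≤ _ := ENNReal.tsum_le_tsum fun n => hκ (u n) (huS n)
    have hbddU : Bornology.IsBounded (⋃ n, Metric.ball (u n) (ε/2)) := by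
      refine (Metric.isBounded_ball (x := x₀) (r := R + ε)).subset ?_
      intro z hz
      obtain ⟨n, hn⟩ := mem_iUnion.1 hz
      have h1 : dist z (u n) < ε/2 := hn
      have h2 : dist (u n) x₀ ≤ R := hdistS _ (huS n) _ hx₀
      exact Metric.mem_ball.2 (lt_of_le_of_lt (dist_triangle z (u n) x₀) (by linarith))
    exact absurd (hm _ hbddU) (by rw [htop]; exact lt_irrefl ⊤)
  exact isCompact_iff_totallyBounded_isComplete.2 ⟨hTB, hSclosed.isComplete⟩

end GMMS
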